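/- Let K be a field of characteristic 0 and d < n. Writing the Schur polynomial s_λ in n variables for a partition λ of d, one has D(s_λ) = ∑_{μ: λ = μ ∪ box} (n + d_{λ\μ}) s_μ, where the sum is over partitions μ obtained from λ by removing one box, and d_{λ\μ} = j - i if the removed box is in row i and column j. -/

import Mathlib

open MvPolynomial

/-- `h_k` for an integer index, with `h_k = 0` for `k < 0`. -/
noncomputable def hz (K : Type*) [CommRing K] (n : ℕ) (k : ℤ) : MvPolynomial (Fin n) K :=
  if 0 ≤ k then hsymm (Fin n) K k.toNat else 0

/-- The Schur polynomial in `n` variables attached to a partition `λ` with at most `n`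
parts (written as an antitone function `Fin n → ℕ`), via the Jacobi–Trudi determinant
`s_λ = det(h_{λᵢ - i + j})`. -/
noncomputable def schur (K : Type*) [CommRing K] (n : ℕ) (lam : Fin n → ℕ) :
    MvPolynomial (Fin n) K :=
  Matrix.det (Matrix.of fun i j : Fin n => hz K n ((lam i : ℤ) - (i : ℤ) + (j : ℤ)))

/-!
`D = ∑ᵢ ∂/∂xᵢ` is a derivation, and since `h_k` has all its coefficients equal to `1` in degree
`k`, `D h_k = (n + k - 1) h_{k-1}`. By Jacobi's formula `D s_λ` is the sum over the rows `r` of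
the Jacobi–Trudi matrix `M = (h_{λᵢ - i + j})` of `det M` with row `r` differentiated. That row
splits as `(n - 1 + λ_r - r) (h_{λ_r - r - 1 + j})_j`, the row of `λ` minus a box in row `r`,
plus `(j h_{λ_r - r + j - 1})_j`, which is row `r` of `M S` for a strictly upper triangular `S`;
these second parts add up to `det M · tr S = 0`. Finally, removing a box from row `r` of a
partition gives a determinant with two equal rows, or with a zero row, unless the result is again
a partition.
-/

namespace MvPolynomial

variable {σ R : Type*} [CommSemiring R]

theorem prod_map_X_eq_monomial [DecidableEq σ] (s : Multiset σ) :
    (s.map X).prod = monomial (Multiset.toFinsupp s) (1 : R) := by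
  rw [Finset.prod_multiset_map_count, ← prod_X_pow_eq_monomial, Multiset.toFinsupp_support]
  rfl

theorem coeff_hsymm [Fintype σ] [DecidableEq σ] (k : ℕ) (m : σ →₀ ℕ) :
    coeff m (hsymm σ R k) = if m.degree = k then 1 else 0 := by
  simp only [hsymm, coeff_sum, prod_map_X_eq_monomial, coeff_monomial,
    Multiset.toFinsupp_eq_iff]
  split_ifs with hm
  · have hcard : Multiset.card (Finsupp.toMultiset m) = k := by
      rw [Finsupp.card_toMultiset, ← hm, Finsupp.degree_apply]; rfl
    rw [Fintype.sum_eq_single (Sym.mk _ hcard)]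
    · simp
    · intro s hs
      exact if_neg fun h => hs (Sym.ext h)
  · refine Finset.sum_eq_zero fun s _ => if_neg fun h => hm ?_
    rw [Finsupp.degree_apply, ← s.2, h, Finsupp.card_toMultiset]; rfl

theorem sum_pderiv_hsymm_succ [Fintype σ] [DecidableEq σ] (k : ℕ) :
    ∑ i, pderiv i (hsymm σ R (k + 1)) =
      ((Fintype.card σ + k : ℕ) : MvPolynomial σ R) * hsymm σ R k := by
  ext m
  rw [← C_eq_coe_nat, coeff_C_mul, coeff_sum]
  simp only [coeff_pderiv, coeff_hsymm, map_add, Finsupp.degree_single, add_left_inj, ite_mul,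
    one_mul, zero_mul]
  split_ifs with hm
  · rw [← hm, Finsupp.degree_eq_sum]
    push_cast
    rw [Finset.sum_add_distrib, Finset.sum_const, Finset.card_univ, nsmul_one, mul_one, add_comm]
  · simp

end MvPolynomial

theorem sum_pderiv_hz (K : Type*) [CommRing K] (n : ℕ) (k : ℤ) :
    ∑ i, pderiv i (hz K n k) = ((n - 1 + k : ℤ) : MvPolynomial (Fin n) K) * hz K n (k - 1) := by
  rcases lt_trichotomy k 0 with hk | rfl | hk
  · rw [hz, hz, if_neg (by omega), if_neg (by omega)]
    simp
  · simp [hz, hsymm_zero]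
  · obtain ⟨m, rfl⟩ : ∃ m : ℕ, k = m + 1 := ⟨k.toNat - 1, by omega⟩
    rw [hz, hz, if_pos (by omega), if_pos (by omega), add_sub_cancel_right, Int.toNat_natCast,
      show ((m : ℤ) + 1).toNat = m + 1 by omega, sum_pderiv_hsymm_succ, Fintype.card_fin]
    push_cast
    ring

namespace Matrix

variable {ι R : Type*} [Fintype ι] [DecidableEq ι] [CommRing R]

theorem det_updateRow_eq_vecMul_adjugate (M : Matrix ι ι R) (r : ι) (v : ι → R) :
    (M.updateRow r v).det = (v ᵥ* M.adjugate) r := by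
  rw [← det_transpose, ← updateCol_transpose, ← cramer_apply, cramer_eq_adjugate_mulVec,
    ← adjugate_transpose, mulVec_transpose]

theorem sum_det_updateRow (M B : Matrix ι ι R) :
    ∑ r, (M.updateRow r (B r)).det = (B * M.adjugate).trace := by
  simp only [det_updateRow_eq_vecMul_adjugate, trace, diag, mul_apply_eq_vecMul]

theorem sum_det_updateRow_mul (M A : Matrix ι ι R) :
    ∑ r, (M.updateRow r ((M * A) r)).det = M.det * A.trace := by
  rw [sum_det_updateRow, trace_mul_comm, ← Matrix.mul_assoc, adjugate_mul, smul_mul,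
    Matrix.one_mul, trace_smul, smul_eq_mul]

end Matrix

namespace Derivation

variable {R A : Type*} [CommRing R] [CommRing A] [Algebra R A]

theorem leibniz_prod {ι : Type*} [DecidableEq ι] (D : Derivation R A A) (s : Finset ι)
    (f : ι → A) : D (∏ i ∈ s, f i) = ∑ i ∈ s, ∏ j ∈ s, Function.update f i (D (f i)) j := by
  induction s using Finset.induction with
  | empty => simp
  | insert a s ha ih =>
    have hfa : ∏ j ∈ s, Function.update f a (D (f a)) j = ∏ j ∈ s, f j :=
      Finset.prod_congr rfl fun j hj => Function.update_of_ne (ne_of_mem_of_not_mem hj ha) _ f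
    rw [Finset.prod_insert ha, leibniz, ih, Finset.sum_insert ha, Finset.prod_insert ha,
      Function.update_self, hfa, Finset.smul_sum, smul_eq_mul, add_comm]
    refine congrArg₂ (· + ·) (mul_comm _ _) (Finset.sum_congr rfl fun i hi => ?_)
    rw [Finset.prod_insert ha, Function.update_of_ne (ne_of_mem_of_not_mem hi ha).symm, smul_eq_mul]

theorem map_det {ι : Type*} [Fintype ι] [DecidableEq ι] (D : Derivation R A A)
    (M : Matrix ι ι A) : D M.det = ∑ r, (M.updateRow r fun j => D (M r j)).det := by
  simp only [Matrix.det_apply, map_sum, Units.smul_def, map_zsmul, leibniz_prod]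
  rw [Finset.sum_comm]
  refine Finset.sum_congr rfl fun σ _ => ?_
  rw [← Finset.smul_sum]
  congr 1
  refine Fintype.sum_equiv σ _ _ fun j => Finset.prod_congr rfl fun i _ => ?_
  rw [Matrix.updateRow_apply, Function.update_apply]
  simp_rw [σ.injective.eq_iff]
  split_ifs with h
  · rw [h]
  · rfl

end Derivation

section JacobiTrudi

variable {K : Type*} [CommRing K] {n : ℕ}

variable (K n) in
noncomputable def jacobiTrudi (a : Fin n → ℤ) : Matrix (Fin n) (Fin n) (MvPolynomial (Fin n) K) :=
  Matrix.of fun i j => hz K n (a i + j)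

variable (n) in
/-- Column `j` of `M * weightedShift n R` is `j` times column `j - 1` of `M`. -/
def weightedShift (R : Type*) [Semiring R] : Matrix (Fin n) (Fin n) R :=
  Matrix.of fun l j => if (l : ℕ) + 1 = j then (j : R) else 0

theorem trace_weightedShift (R : Type*) [Semiring R] : (weightedShift n R).trace = 0 :=
  Finset.sum_eq_zero fun l _ => if_neg l.val.succ_ne_self

theorem schur_eq_det_jacobiTrudi (lam : Fin n → ℕ) :
    schur K n lam = (jacobiTrudi K n fun i => (lam i : ℤ) - i).det :=
  rfl

theorem jacobiTrudi_mul_weightedShift_apply (a : Fin n → ℤ) (r j : Fin n) :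
    (jacobiTrudi K n a * weightedShift n (MvPolynomial (Fin n) K)) r j =
      (j : MvPolynomial (Fin n) K) * hz K n (a r + j - 1) := by
  simp only [Matrix.mul_apply, jacobiTrudi, weightedShift, Matrix.of_apply, mul_ite, mul_zero]
  rcases Nat.eq_zero_or_pos (j : ℕ) with hj | hj
  · rw [Finset.sum_eq_zero fun l _ => if_neg (by omega), hj, Nat.cast_zero, zero_mul]
  · rw [Fintype.sum_eq_single ⟨j - 1, by omega⟩ fun l hl => if_neg fun h => hl (Fin.ext (by dsimp only; omega)),
      if_pos (by dsimp only; omega), mul_comm]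
    congr 2
    push_cast [Nat.cast_sub hj]
    ring

theorem updateRow_jacobiTrudi (a b : Fin n → ℤ) (r : Fin n) :
    (jacobiTrudi K n a).updateRow r (jacobiTrudi K n b r) =
      jacobiTrudi K n (Function.update a r (b r)) := by
  ext i j
  by_cases hi : i = r
  · subst hi; simp [jacobiTrudi]
  · simp [jacobiTrudi, hi]

theorem sum_pderiv_jacobiTrudi_row (a : Fin n → ℤ) (r : Fin n) :
    (fun j => ∑ i, pderiv i (jacobiTrudi K n a r j)) =
      ((n - 1 + a r : ℤ) : MvPolynomial (Fin n) K) •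
          jacobiTrudi K n (Function.update a r (a r - 1)) r +
        (jacobiTrudi K n a * weightedShift n (MvPolynomial (Fin n) K)) r := by
  ext1 j
  rw [Pi.add_apply, Pi.smul_apply, jacobiTrudi_mul_weightedShift_apply, jacobiTrudi, jacobiTrudi,
    Matrix.of_apply, Matrix.of_apply, Function.update_self, sum_pderiv_hz, smul_eq_mul,
    sub_add_eq_add_sub (a r), ← add_mul]
  congr 1
  push_cast
  ring

theorem sum_pderiv_det_jacobiTrudi (a : Fin n → ℤ) :
    ∑ i, pderiv i (jacobiTrudi K n a).det =
      ∑ r, ((n - 1 + a r : ℤ) : MvPolynomial (Fin n) K) *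
        (jacobiTrudi K n (Function.update a r (a r - 1))).det := by
  let D : Derivation K (MvPolynomial (Fin n) K) (MvPolynomial (Fin n) K) := ∑ i, pderiv i
  have hD (p : MvPolynomial (Fin n) K) : D p = ∑ i, pderiv i p := by
    change Derivation.coeFnAddMonoidHom (∑ i, pderiv i) p = _
    rw [map_sum, Finset.sum_apply]
    rfl
  rw [← hD, Derivation.map_det]
  simp only [hD, sum_pderiv_jacobiTrudi_row, Matrix.det_updateRow_add, Matrix.det_updateRow_smul,
    Finset.sum_add_distrib, Matrix.sum_det_updateRow_mul, trace_weightedShift, mul_zero, add_zero,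
    updateRow_jacobiTrudi, Function.update_self]

theorem det_jacobiTrudi_eq_zero_of_eq {a : Fin n → ℤ} {i j : Fin n} (hij : i ≠ j)
    (h : a i = a j) : (jacobiTrudi K n a).det = 0 :=
  Matrix.det_zero_of_row_eq hij (funext fun k => by simp only [jacobiTrudi, Matrix.of_apply, h])

theorem det_jacobiTrudi_eq_zero_of_add_nonpos {a : Fin n → ℤ} (r : Fin n) (h : a r + n ≤ 0) :
    (jacobiTrudi K n a).det = 0 :=
  Matrix.det_eq_zero_of_row_eq_zero r fun j => if_neg (by omega)

end JacobiTrudi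

section Partition

variable {n : ℕ} {lam : Fin n → ℕ}

theorem Antitone.update_sub_one (hanti : Antitone lam) {r : Fin n}
    (h : ∀ s, r < s → lam s < lam r) : Antitone (Function.update lam r (lam r - 1)) := by
  intro a c hac
  have := hanti hac
  simp only [Function.update_apply]
  split_ifs with hc ha ha
  · omega
  · subst hc
    omega
  · subst ha
    have := h c (lt_of_le_of_ne hac (Ne.symm hc))
    omega
  · exact this

theorem Antitone.eq_succ_or_last_of_not_antitone_update (hanti : Antitone lam) {r : Fin n}
    (hr : ¬(0 < lam r ∧ Antitone (Function.update lam r (lam r - 1)))) :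
    (∃ s : Fin n, (s : ℕ) = r + 1 ∧ lam s = lam r) ∨ ((r : ℕ) + 1 = n ∧ lam r = 0) := by
  by_cases hlast : (r : ℕ) + 1 < n
  · left
    refine ⟨⟨r + 1, hlast⟩, rfl, ?_⟩
    have hle := hanti (show r ≤ ⟨r + 1, hlast⟩ from Fin.le_def.mpr (Nat.le_succ _))
    by_contra hne
    refine hr ⟨by omega, hanti.update_sub_one fun s hs => ?_⟩
    have := hanti (show (⟨r + 1, hlast⟩ : Fin n) ≤ s from Fin.le_def.mpr hs)
    omega
  · right
    refine ⟨by omega, Nat.eq_zero_of_not_pos fun hpos => hr ⟨hpos, hanti.update_sub_one ?_⟩⟩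
    intro s hs
    have := s.isLt
    have : (r : ℕ) < s := hs
    omega

end Partition

section RemoveBox

variable {K : Type*} [CommRing K] {n : ℕ} {lam : Fin n → ℕ} {r : Fin n}

theorem schur_update_sub_one (hr : 0 < lam r) :
    schur K n (Function.update lam r (lam r - 1)) =
      (jacobiTrudi K n (Function.update (fun i => (lam i : ℤ) - i) r ((lam r : ℤ) - r - 1))).det := by
  rw [schur_eq_det_jacobiTrudi]
  congr 2
  ext i
  by_cases hi : i = r
  · subst hi
    simp only [Function.update_self]
    omega
  · simp [hi]

theorem det_jacobiTrudi_remove_box_eq_zero (hanti : Antitone lam)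
    (hr : ¬(0 < lam r ∧ Antitone (Function.update lam r (lam r - 1)))) :
    (jacobiTrudi K n (Function.update (fun i => (lam i : ℤ) - i) r ((lam r : ℤ) - r - 1))).det
      = 0 := by
  rcases hanti.eq_succ_or_last_of_not_antitone_update hr with ⟨s, hs, heq⟩ | ⟨hlast, hzero⟩
  · have hsr : s ≠ r := Fin.ne_of_val_ne (by omega)
    refine det_jacobiTrudi_eq_zero_of_eq hsr.symm ?_
    simp only [Function.update_self, Function.update_of_ne hsr, heq]
    omega
  · refine det_jacobiTrudi_eq_zero_of_add_nonpos r ?_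
    simp only [Function.update_self, hzero]
    omega

end RemoveBox

theorem sum_pderiv_schur_general (K : Type*) [Field K] (n : ℕ) (lam : Fin n → ℕ) (hanti : Antitone lam) :
    (∑ i : Fin n, pderiv i (schur K n lam)) =
      ∑ i ∈ Finset.univ.filter
          (fun i : Fin n => 0 < lam i ∧ Antitone (Function.update lam i (lam i - 1))),
        ((n + lam i - (i.val + 1) : ℕ) : MvPolynomial (Fin n) K) *
          schur K n (Function.update lam i (lam i - 1)) := by
  rw [schur_eq_det_jacobiTrudi, sum_pderiv_det_jacobiTrudi, ← Finset.sum_filter_of_ne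
    (p := fun r => 0 < lam r ∧ Antitone (Function.update lam r (lam r - 1)))]
  · refine Finset.sum_congr rfl fun r hr => ?_
    have hcoeff : ((n + lam r - (r + 1) : ℕ) : ℤ) = n - 1 + ((lam r : ℤ) - r) := by omega
    rw [← Int.cast_natCast (R := MvPolynomial (Fin n) K), hcoeff,
      schur_update_sub_one (Finset.mem_filter.mp hr).2.1]
  · intro r _ hne
    by_contra hr
    exact hne (by rw [det_jacobiTrudi_remove_box_eq_zero hanti hr, mul_zero])

/-- In characteristic `0`, for a partition `λ ⊢ d` with `d < n`,
`D(s_λ) = ∑_{μ = λ minus a box} (n + d_{λ\μ}) s_μ`, where `D = ∑ᵢ ∂/∂xᵢ` and, for a box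
removed in (1-indexed) row `i` and column `j`, `n + d_{λ\μ} = n + j - i`. -/
theorem sum_pderiv_schur (K : Type*) [Field K] [CharZero K] (n d : ℕ)
    (hd : 1 ≤ d) (hdn : d < n) (lam : Fin n → ℕ) (hanti : Antitone lam)
    (hsum : ∑ i, lam i = d) :
    (∑ i : Fin n, pderiv i (schur K n lam)) =
      ∑ i ∈ Finset.univ.filter
          (fun i : Fin n => 0 < lam i ∧ Antitone (Function.update lam i (lam i - 1))),
        ((n + lam i - (i.val + 1) : ℕ) : MvPolynomial (Fin n) K) *
          schur K n (Function.update lam i (lam i - 1)) :=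
  sum_pderiv_schur_general K n lam hanti
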